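/- arXiv:2301.05002 — 2 statements merged into one kernel-verified Lean document; each statement's English description precedes it below -/
import Mathlib

section
/- Let {xᵏ} be a sequence generated by the proximal gradient method, suppose Assumption A holds, and let x* be an accumulation point of {xᵏ}. Then the entire sequence {ψ(xᵏ)} converges to ψ(x*). -/
open Filter Topology Set Pointwise

variable {X : Type*} [NormedAddCommGroup X] [InnerProductSpace ℝ X] [FiniteDimensional ℝ X]

/-- The objective `ψ = f + φ` with extended-real values. -/
noncomputable def psi (f : X → ℝ) (φ : X → EReal) : X → EReal :=
  fun z => (f z : EReal) + φ z

/-- The subproblem objective of the proximal gradient method at base point `x`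
with stepsize parameter `γ`. -/
noncomputable def proxModel (f : X → ℝ) (φ : X → EReal) (x : X) (γ : ℝ) : X → EReal :=
  fun z => ((f x + (inner ℝ (gradient f x) (z - x) : ℝ) + γ / 2 * ‖z - x‖ ^ 2 : ℝ) : EReal) + φ z

/-- Fréchet (regular) subdifferential of `g` at `x`. -/
def frechetSubdiff (g : X → EReal) (x : X) : Set X :=
  {η | ∀ ε : ℝ, 0 < ε →
      ∀ᶠ y in nhds x, g x + (((inner ℝ η (y - x) : ℝ) - ε * ‖y - x‖ : ℝ) : EReal) ≤ g y}

/-- Limiting (Mordukhovich) subdifferential of `g` at `x`. -/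
def limitingSubdiff (g : X → EReal) (x : X) : Set X :=
  {η | ∃ u v : ℕ → X,
      Tendsto u atTop (nhds x) ∧ Tendsto (fun j => g (u j)) atTop (nhds (g x)) ∧
      Tendsto v atTop (nhds η) ∧ ∀ j, v j ∈ frechetSubdiff g (u j)}

/-- The sequences `x` (iterates) and `γ` (stepsizes) are generated by the proximal
gradient method with parameters `τ > 1`, `0 < γmin ≤ γmax`, `δ ∈ (0,1)`:
at every iteration `k` there are a chosen `γ0 ∈ [γmin, γmax]`, trial points `y j`
(each a global minimizer of the subproblem with stepsize `τ ^ j * γ0`), and a first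
index `i` at which the acceptance criterion holds; then `γ k = τ ^ i * γ0` and
`x (k+1) = y i`. -/
structure ProxGrad (f : X → ℝ) (φ : X → EReal) (τ γmin γmax δ : ℝ)
    (x : ℕ → X) (γ : ℕ → ℝ) : Prop where
  htau : 1 < τ
  hgmin : 0 < γmin
  hgmm : γmin ≤ γmax
  hdelta0 : 0 < δ
  hdelta1 : δ < 1
  hx0 : φ (x 0) ≠ ⊤
  step : ∀ k : ℕ, ∃ (γ0 : ℝ) (i : ℕ) (y : ℕ → X),
      γmin ≤ γ0 ∧ γ0 ≤ γmax ∧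
      (∀ j ≤ i, ∀ z : X,
        proxModel f φ (x k) (τ ^ j * γ0) (y j) ≤ proxModel f φ (x k) (τ ^ j * γ0) z) ∧
      psi f φ (y i) ≤
        psi f φ (x k) - ((δ * (τ ^ i * γ0) / 2 * ‖y i - x k‖ ^ 2 : ℝ) : EReal) ∧
      (∀ j < i, ¬ psi f φ (y j) ≤
        psi f φ (x k) - ((δ * (τ ^ j * γ0) / 2 * ‖y j - x k‖ ^ 2 : ℝ) : EReal)) ∧
      γ k = τ ^ i * γ0 ∧ x (k + 1) = y i

/-- Assumption A: `ψ` is bounded below on `dom φ`, `φ` is bounded below by an affine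
function, and `∇f` is locally Lipschitz continuous. -/
def AssumptionA (f : X → ℝ) (φ : X → EReal) : Prop :=
  (∃ m : ℝ, ∀ z : X, φ z ≠ ⊤ → (m : EReal) ≤ psi f φ z) ∧
  (∃ a : X, ∃ b : ℝ, ∀ z : X, (((inner ℝ a z : ℝ) + b : ℝ) : EReal) ≤ φ z) ∧
  LocallyLipschitz (gradient f)

/-- `g` has the Kurdyka–Łojasiewicz property at `xs` with constant `η` and
desingularization function `χ`. -/
def HasKLProperty (g : X → EReal) (xs : X) (η : ℝ) (χ : ℝ → ℝ) : Prop :=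
  0 < η ∧ (limitingSubdiff g xs).Nonempty ∧
  ContinuousOn χ (Icc 0 η) ∧ ConcaveOn ℝ (Icc 0 η) χ ∧
  (∀ t ∈ Icc (0 : ℝ) η, 0 ≤ χ t) ∧ χ 0 = 0 ∧
  (∀ t ∈ Ioo (0 : ℝ) η, DifferentiableAt ℝ χ t ∧ 0 < deriv χ t) ∧
  ContinuousOn (deriv χ) (Ioo 0 η) ∧
  ∃ U ∈ nhds xs, ∀ y ∈ U, g xs < g y → g y < g xs + (η : EReal) →
    1 ≤ deriv χ ((g y - g xs).toReal) * Metric.infDist 0 (limitingSubdiff g y)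


section Helpers

variable {X : Type*} [NormedAddCommGroup X] [InnerProductSpace ℝ X] [FiniteDimensional ℝ X]

lemma segment_norm_le' {u v z : X} (hz : z ∈ segment ℝ u v) : ‖z - u‖ ≤ ‖v - u‖ := by
  obtain ⟨t1, t2, ht1, ht2, hsum, rfl⟩ := hz
  have h : t1 • u + t2 • v - u = t2 • (v - u) := by
    have : t1 = 1 - t2 := by linarith
    subst this; module
  rw [h, norm_smul, Real.norm_eq_abs, abs_of_nonneg ht2]
  nlinarith [norm_nonneg (v - u)]

lemma gradient_toDual (f : X → ℝ) (z : X) :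
    (InnerProductSpace.toDual ℝ X) (gradient f z) = fderiv ℝ f z :=
  (InnerProductSpace.toDual ℝ X).apply_symm_apply _

lemma descent_lite {f : X → ℝ} (hf : ContDiff ℝ 1 f) {K : NNReal} {s : Set X}
    (hlip : LipschitzOnWith K (gradient f) s)
    {u v : X} (hseg : segment ℝ u v ⊆ s) :
    f v ≤ f u + (inner ℝ (gradient f u) (v - u) : ℝ) + K * ‖v - u‖ ^ 2 := by
  have hd : ∀ z ∈ segment ℝ u v, HasFDerivWithinAt f (fderiv ℝ f z) (segment ℝ u v) z :=
    fun z _ => ((hf.differentiable one_ne_zero) z).hasFDerivAt.hasFDerivWithinAt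
  have hbound : ∀ z ∈ segment ℝ u v, ‖fderiv ℝ f z - fderiv ℝ f u‖ ≤ (K : ℝ) * ‖v - u‖ := by
    intro z hz
    have h1 : ‖z - u‖ ≤ ‖v - u‖ := segment_norm_le' hz
    have h2 : ‖gradient f z - gradient f u‖ ≤ (K : ℝ) * ‖z - u‖ := by
      have := hlip.dist_le_mul z (hseg hz) u (hseg (left_mem_segment ℝ u v))
      simpa [dist_eq_norm] using this
    have h3 : ‖fderiv ℝ f z - fderiv ℝ f u‖ = ‖gradient f z - gradient f u‖ := by
      rw [← gradient_toDual f z, ← gradient_toDual f u, ← map_sub,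
        LinearIsometryEquiv.norm_map]
    rw [h3]
    calc ‖gradient f z - gradient f u‖ ≤ (K : ℝ) * ‖z - u‖ := h2
      _ ≤ (K : ℝ) * ‖v - u‖ := mul_le_mul_of_nonneg_left h1 K.2
  have hmv := Convex.norm_image_sub_le_of_norm_hasFDerivWithin_le' hd hbound
    (convex_segment u v) (left_mem_segment ℝ u v) (right_mem_segment ℝ u v)
  have hin : (fderiv ℝ f u) (v - u) = (inner ℝ (gradient f u) (v - u) : ℝ) := by
    rw [← gradient_toDual f u]; exact InnerProductSpace.toDual_apply_apply
  rw [hin, Real.norm_eq_abs] at hmv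
  have := abs_le.mp hmv
  nlinarith [this.1, this.2]

lemma ereal_lt_coe_add_iff {a c : ℝ} {u : EReal} :
    (c : EReal) < (a : EReal) + u ↔ ((c - a : ℝ) : EReal) < u := by
  induction u using EReal.rec with
  | bot => simp
  | coe x =>
    rw [← EReal.coe_add, EReal.coe_lt_coe_iff, EReal.coe_lt_coe_iff]
    constructor <;> intro <;> linarith
  | top => simpa [EReal.coe_add_top] using EReal.coe_lt_top (c - a)

lemma psi_real' (f : X → ℝ) (φ : X → EReal) {z : X} (h1 : φ z ≠ ⊤) (h2 : φ z ≠ ⊥) :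
    psi f φ z = ((f z + (φ z).toReal : ℝ) : EReal) := by
  show (f z : EReal) + φ z = _
  rw [EReal.coe_add]
  congr 1
  exact (EReal.coe_toReal h1 h2).symm

lemma prox_ne_top {f : X → ℝ} {φ : X → EReal} (hbot : ∀ z, φ z ≠ ⊥) {x w z : X} {g : ℝ}
    (hz : φ z ≠ ⊤) (h : proxModel f φ x g w ≤ proxModel f φ x g z) : φ w ≠ ⊤ := by
  intro hw
  simp only [proxModel, hw, EReal.coe_add_top] at h
  rw [← EReal.coe_toReal hz (hbot z), ← EReal.coe_add, top_le_iff] at h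
  exact EReal.coe_ne_top _ h

lemma prox_real {f : X → ℝ} {φ : X → EReal} (hbot : ∀ z, φ z ≠ ⊥) {x w z : X} {g : ℝ}
    (hw : φ w ≠ ⊤) (hz : φ z ≠ ⊤) (h : proxModel f φ x g w ≤ proxModel f φ x g z) :
    (inner ℝ (gradient f x) (w - x) : ℝ) + g / 2 * ‖w - x‖ ^ 2 + (φ w).toReal ≤
      (inner ℝ (gradient f x) (z - x) : ℝ) + g / 2 * ‖z - x‖ ^ 2 + (φ z).toReal := by
  simp only [proxModel] at h
  rw [← EReal.coe_toReal hw (hbot w), ← EReal.coe_toReal hz (hbot z), ← EReal.coe_add,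
    ← EReal.coe_add, EReal.coe_le_coe_iff] at h
  linarith

lemma accept_real {f : X → ℝ} {φ : X → EReal} (hbot : ∀ z, φ z ≠ ⊥) {w v : X} {c : ℝ}
    (h1 : φ w ≠ ⊤) (h2 : φ v ≠ ⊤)
    (h : psi f φ w ≤ psi f φ v - (c : EReal)) :
    f w + (φ w).toReal ≤ f v + (φ v).toReal - c := by
  rw [psi_real' f φ h1 (hbot w), psi_real' f φ h2 (hbot v), ← EReal.coe_sub,
    EReal.coe_le_coe_iff] at h
  exact h

end Helpers

set_option maxHeartbeats 1000000 in
/-- under Assumption A, if `x*` is an accumulation point of the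
iterates, the entire sequence `{ψ(xᵏ)}` converges to `ψ(x*)`. -/
theorem statement8
    (f : X → ℝ) (φ : X → EReal)
    (hf : ContDiff ℝ 1 f) (hφlsc : LowerSemicontinuous φ)
    (hφbot : ∀ z : X, φ z ≠ ⊥) (hproper : ∃ z : X, φ z ≠ ⊤)
    (τ γmin γmax δ : ℝ) (x : ℕ → X) (γ : ℕ → ℝ)
    (halg : ProxGrad f φ τ γmin γmax δ x γ)
    (hA : AssumptionA f φ)
    (xs : X) (σ : ℕ → ℕ) (hσ : StrictMono σ)
    (hconv : Tendsto (fun k => x (σ k)) atTop (nhds xs)) :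
    Tendsto (fun k => psi f φ (x k)) atTop (nhds (psi f φ xs)) := by
  classical
  obtain ⟨⟨m, hm⟩, ⟨a, b, haff⟩, hlip⟩ := hA
  have hτ1 : 1 < τ := halg.htau
  have hτpos : (0:ℝ) < τ := lt_trans one_pos hτ1
  have hγmin0 : 0 < γmin := halg.hgmin
  have hδ0 : 0 < δ := halg.hdelta0
  have hδ1 : δ < 1 := halg.hdelta1
  have hfd : Differentiable ℝ f := hf.differentiable one_ne_zero
  have hfc : Continuous f := hfd.continuous
  have hgc : Continuous (gradient f) :=
    (InnerProductSpace.toDual ℝ X).symm.continuous.comp (hf.continuous_fderiv one_ne_zero)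
  -- finiteness of φ along the iterates
  have hTop : ∀ k, φ (x k) ≠ ⊤ := by
    intro k
    induction k with
    | zero => exact halg.hx0
    | succ k ih =>
      obtain ⟨γ0, i, y, _, _, hmin, _, _, _, hxk1⟩ := halg.step k
      rw [hxk1]
      exact prox_ne_top hφbot ih (hmin i le_rfl (x k))
  set s : ℕ → ℝ := fun k => f (x k) + (φ (x k)).toReal with hs
  clear_value s
  have hpsix : ∀ k, psi f φ (x k) = ((s k : ℝ) : EReal) := by
    intro k; rw [hs]; exact psi_real' f φ (hTop k) (hφbot _)
  have hγlb : ∀ k, γmin ≤ γ k := by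
    intro k
    obtain ⟨γ0, i, y, hγ01, hγ02, _, _, _, hγk, _⟩ := halg.step k
    have h1 : (1:ℝ) ≤ τ ^ i := one_le_pow₀ hτ1.le
    rw [hγk]; nlinarith
  have hγpos : ∀ k, 0 < γ k := fun k => lt_of_lt_of_le hγmin0 (hγlb k)
  -- sufficient decrease, in real form
  have hdec : ∀ k, s (k + 1) ≤ s k - δ * γ k / 2 * ‖x (k + 1) - x k‖ ^ 2 := by
    intro k
    obtain ⟨γ0, i, y, _, _, hmin, hacc, _, hγk, hxk1⟩ := halg.step k
    have hyt : φ (y i) ≠ ⊤ := hxk1 ▸ hTop (k + 1)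
    have h := accept_real hφbot hyt (hTop k) hacc
    rw [← hxk1, ← hγk] at h
    simpa only [hs] using h
  have hmono : Antitone s := by
    apply antitone_nat_of_succ_le
    intro k
    have h0 : 0 ≤ δ * γ k / 2 * ‖x (k + 1) - x k‖ ^ 2 :=
      mul_nonneg (by nlinarith [hγpos k]) (sq_nonneg _)
    linarith [hdec k]
  have hlbk : ∀ k, m ≤ s k := by
    intro k
    have h := hm (x k) (hTop k)
    rw [hpsix k, EReal.coe_le_coe_iff] at h
    exact h
  have hbdd : BddBelow (Set.range s) := ⟨m, by rintro _ ⟨k, rfl⟩; exact hlbk k⟩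
  set L : ℝ := ⨅ k, s k with hLdef
  clear_value L
  have hsL : Tendsto s atTop (𝓝 L) := by rw [hLdef]; exact tendsto_atTop_ciInf hmono hbdd
  have hLle : ∀ k, L ≤ s k := by intro k; rw [hLdef]; exact ciInf_le hbdd k
  -- successive differences tend to zero
  have hdiff2 : Tendsto (fun k => ‖x (k + 1) - x k‖ ^ 2) atTop (𝓝 0) := by
    have h1 : Tendsto (fun k => s (k + 1)) atTop (𝓝 L) := hsL.comp (tendsto_add_atTop_nat 1)
    have h2 : Tendsto (fun k => s k - s (k + 1)) atTop (𝓝 0) := by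
      simpa using hsL.sub h1
    have hub : Tendsto (fun k => 2 / (δ * γmin) * (s k - s (k + 1))) atTop (𝓝 0) := by
      simpa using h2.const_mul (2 / (δ * γmin))
    apply squeeze_zero (fun k => sq_nonneg _) _ hub
    intro k
    have hγk := hγlb k
    have hd := hdec k
    rw [div_mul_eq_mul_div, le_div_iff₀ (mul_pos hδ0 hγmin0)]
    linarith [hd,
      mul_nonneg (mul_nonneg hδ0.le (sq_nonneg ‖x (k + 1) - x k‖)) (sub_nonneg.mpr hγk)]
  have hdiff : Tendsto (fun k => ‖x (k + 1) - x k‖) atTop (𝓝 0) := by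
    have h1 := (Real.continuous_sqrt.tendsto 0).comp hdiff2
    rw [Real.sqrt_zero] at h1
    exact h1.congr fun k => Real.sqrt_sq (norm_nonneg _)
  have hσat : Tendsto σ atTop atTop := hσ.tendsto_atTop
  have hconv' : Tendsto (fun j => x (σ j + 1)) atTop (𝓝 xs) := by
    have h1 : Tendsto (fun j => ‖x (σ j + 1) - x (σ j)‖) atTop (𝓝 0) := hdiff.comp hσat
    have h2 : Tendsto (fun j => x (σ j + 1) - x (σ j)) atTop (𝓝 0) :=
      tendsto_zero_iff_norm_tendsto_zero.mpr h1
    have h3 := h2.add hconv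
    simpa using h3
  -- lower semicontinuity: ψ(xs) ≤ L
  have hup : psi f φ xs ≤ (L : EReal) := by
    by_contra hcon
    push_neg at hcon
    obtain ⟨c, hc1, hc2⟩ := EReal.lt_iff_exists_real_btwn.mp hcon
    obtain ⟨c', hc1', hc2'⟩ := EReal.lt_iff_exists_real_btwn.mp hc2
    have hcc' : c < c' := EReal.coe_lt_coe_iff.mp hc1'
    have hφlt : ((c' - f xs : ℝ) : EReal) < φ xs := ereal_lt_coe_add_iff.mp hc2'
    have hev1 : ∀ᶠ z in nhds xs, ((c' - f xs : ℝ) : EReal) < φ z := hφlsc xs _ hφlt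
    have hev2 : ∀ᶠ z in nhds xs, f xs - (c' - c) < f z :=
      (hfc.tendsto xs).eventually_const_lt (by linarith)
    have hev : ∀ᶠ z in nhds xs, (c : EReal) < psi f φ z := by
      filter_upwards [hev1, hev2] with z h1 h2
      have h3 : (c : EReal) < ((f z + (c' - f xs) : ℝ) : EReal) := by
        rw [EReal.coe_lt_coe_iff]; linarith
      have h4 : ((f z + (c' - f xs) : ℝ) : EReal) < (f z : EReal) + φ z := by
        rw [EReal.coe_add]; exact EReal.add_lt_add_left_coe h1 (f z)
      exact lt_trans h3 h4
    have hev' : ∀ᶠ j in atTop, c ≤ s (σ j) := by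
      filter_upwards [hconv.eventually hev] with j hj
      rw [hpsix (σ j), EReal.coe_lt_coe_iff] at hj
      exact hj.le
    have hcleL : c ≤ L := ge_of_tendsto (hsL.comp hσat) hev'
    have : L < c := EReal.coe_lt_coe_iff.mp hc1
    linarith
  have hφxs : φ xs ≠ ⊤ := by
    intro h
    have : psi f φ xs = ⊤ := by
      show (f xs : EReal) + φ xs = ⊤
      rw [h, EReal.coe_add_top]
    rw [this, top_le_iff] at hup
    exact EReal.coe_ne_top L hup
  -- local Lipschitz data around xs
  obtain ⟨K, t, ht, hKlip⟩ := hlip xs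
  obtain ⟨ρ, hρpos, hball⟩ := Metric.mem_nhds_iff.mp ht
  have hKball : LipschitzOnWith K (gradient f) (Metric.ball xs ρ) := hKlip.mono hball
  -- constants
  set N : ℝ := ‖gradient f xs‖ + 1 with hNdef
  set P : ℝ := s 0 - f xs + 1 with hPdef
  set Q : ℝ := ‖xs‖ + 1 with hQdef
  set C₁ : ℝ := max (P + ‖a‖ * Q - b) 0 with hC₁def
  set C₂ : ℝ := ‖a‖ + N with hC₂def
  set Gq : ℝ := (4 * C₁ + 4 * C₂ ^ 2 + 1) / (ρ / 2) ^ 2 with hGqdef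
  set Gb : ℝ := max (max 1 Gq) (max γmax (2 * (K : ℝ) / (1 - δ))) with hGbdef
  set Γ : ℝ := τ * Gb with hΓdef
  clear_value N P Q C₁ C₂ Gq Gb Γ
  have hC₁0 : 0 ≤ C₁ := by rw [hC₁def]; exact le_max_right _ _
  have hC₁ge : P + ‖a‖ * Q - b ≤ C₁ := by rw [hC₁def]; exact le_max_left _ _
  have hGb1 : (1:ℝ) ≤ Gb := by rw [hGbdef]; exact le_trans (le_max_left _ _) (le_max_left _ _)
  have hGbq : Gq ≤ Gb := by rw [hGbdef]; exact le_trans (le_max_right _ _) (le_max_left _ _)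
  have hGbK : 2 * (K : ℝ) / (1 - δ) ≤ Gb := by
    rw [hGbdef]; exact le_trans (le_max_right _ _) (le_max_right _ _)
  have hGbmax : γmax ≤ Gb := by
    rw [hGbdef]; exact le_trans (le_max_left _ _) (le_max_right _ _)
  have hGbpos : (0:ℝ) < Gb := lt_of_lt_of_le one_pos hGb1
  -- eventual bounds along the subsequence
  have hgradconv : Tendsto (fun j => gradient f (x (σ j))) atTop (𝓝 (gradient f xs)) :=
    (hgc.tendsto xs).comp hconv
  have hfconv : Tendsto (fun j => f (x (σ j))) atTop (𝓝 (f xs)) := (hfc.tendsto xs).comp hconv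
  have hevN : ∀ᶠ j in atTop, ‖gradient f (x (σ j))‖ ≤ N :=
    hgradconv.norm.eventually_le_const (by rw [hNdef]; linarith)
  have hevP : ∀ᶠ j in atTop, (φ (x (σ j))).toReal ≤ P := by
    have h1 : ∀ᶠ j in atTop, f xs - 1 < f (x (σ j)) :=
      hfconv.eventually_const_lt (by linarith)
    filter_upwards [h1] with j hj
    have h2 : s (σ j) ≤ s 0 := hmono (Nat.zero_le _)
    have h3 : s (σ j) = f (x (σ j)) + (φ (x (σ j))).toReal := by rw [hs]
    rw [hPdef]
    linarith
  have hevQ : ∀ᶠ j in atTop, ‖x (σ j)‖ ≤ Q :=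
    hconv.norm.eventually_le_const (by rw [hQdef]; linarith)
  have hevρ : ∀ᶠ j in atTop, ‖x (σ j) - xs‖ < ρ / 2 := by
    have h1 : Tendsto (fun j => ‖x (σ j) - xs‖) atTop (𝓝 0) :=
      tendsto_iff_norm_sub_tendsto_zero.mp hconv
    exact h1.eventually_lt_const (by linarith)
  -- stepsize bound
  have hgb : ∀ k, ‖gradient f (x k)‖ ≤ N → (φ (x k)).toReal ≤ P → ‖x k‖ ≤ Q →
      ‖x k - xs‖ < ρ / 2 → γ k ≤ Γ := by
    intro k hN' hP' hQ' hρ'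
    by_contra hcon
    push_neg at hcon
    rw [hΓdef] at hcon
    obtain ⟨γ0, i, y, hγ01, hγ02, hmin, hacc, hfail, hγk, hxk1⟩ := halg.step k
    cases i with
    | zero =>
      rw [hγk, pow_zero, one_mul] at hcon
      have hγ0Gb : γ0 ≤ Gb := le_trans hγ02 hGbmax
      linarith [mul_pos (sub_pos.mpr hτ1) hGbpos]
    | succ n =>
      have hγτ : γ k = τ * (τ ^ n * γ0) := by rw [hγk, pow_succ]; ring
      have hg'Gb : Gb < τ ^ n * γ0 := by
        rw [hγτ] at hcon
        exact (mul_lt_mul_iff_right₀ hτpos).mp hcon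
      have hg'pos : (0:ℝ) < τ ^ n * γ0 := lt_trans hGbpos hg'Gb
      have hg'1 : (1:ℝ) ≤ τ ^ n * γ0 := le_of_lt (lt_of_le_of_lt hGb1 hg'Gb)
      have hminn := hmin n (Nat.le_succ n)
      have hwt : φ (y n) ≠ ⊤ := prox_ne_top hφbot (hTop k) (hminn (x k))
      have hA' : (inner ℝ (gradient f (x k)) (y n - x k) : ℝ)
          + (τ ^ n * γ0) / 2 * ‖y n - x k‖ ^ 2 + (φ (y n)).toReal ≤ (φ (x k)).toReal := by
        have h := prox_real hφbot hwt (hTop k) (hminn (x k))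
        simp only [sub_self, inner_zero_right, norm_zero] at h
        linarith [h]
      have haffw : (inner ℝ a (y n) : ℝ) + b ≤ (φ (y n)).toReal := by
        have h := haff (y n)
        rw [← EReal.coe_toReal hwt (hφbot (y n)), EReal.coe_le_coe_iff] at h
        exact h
      have hiaw : (inner ℝ a (y n) : ℝ) = (inner ℝ a (x k) : ℝ) + (inner ℝ a (y n - x k) : ℝ) := by
        rw [← inner_add_right]
        congr 1
        abel
      have hCS1 := abs_le.mp (abs_real_inner_le_norm a (x k))
      have hCS2 := abs_le.mp (abs_real_inner_le_norm a (y n - x k))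
      have hCS3 : -(N * ‖y n - x k‖) ≤ (inner ℝ (gradient f (x k)) (y n - x k) : ℝ) := by
        have h1 := (abs_le.mp (abs_real_inner_le_norm (gradient f (x k)) (y n - x k))).1
        have h2 : ‖gradient f (x k)‖ * ‖y n - x k‖ ≤ N * ‖y n - x k‖ :=
          mul_le_mul_of_nonneg_right hN' (norm_nonneg _)
        linarith
      have hQa : ‖a‖ * ‖x k‖ ≤ ‖a‖ * Q := mul_le_mul_of_nonneg_left hQ' (norm_nonneg a)
      have h1 : (τ ^ n * γ0) / 2 * ‖y n - x k‖ ^ 2 ≤ C₁ + C₂ * ‖y n - x k‖ := by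
        rw [hC₂def]
        linarith only [hA', haffw, hiaw, hCS1.1, hCS2.1, hCS3, hQa, hC₁ge, hP']
      have h2a : (τ ^ n * γ0) ^ 2 * ‖y n - x k‖ ^ 2 ≤ 4 * C₁ * (τ ^ n * γ0) + 4 * C₂ ^ 2 := by
        linarith only [mul_le_mul_of_nonneg_left h1 (by linarith : (0:ℝ) ≤ 4 * (τ ^ n * γ0)),
          sq_nonneg (τ ^ n * γ0 * ‖y n - x k‖ - 2 * C₂), h1]
      have hq : 4 * C₁ + 4 * C₂ ^ 2 + 1 ≤ (τ ^ n * γ0) * (ρ / 2) ^ 2 := by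
        have hGq : Gq ≤ τ ^ n * γ0 := le_trans hGbq hg'Gb.le
        rw [hGqdef, div_le_iff₀ (by positivity : (0:ℝ) < (ρ / 2) ^ 2)] at hGq
        linarith
      have h3 : (τ ^ n * γ0) ^ 2 * ‖y n - x k‖ ^ 2 < (τ ^ n * γ0) ^ 2 * (ρ / 2) ^ 2 := by
        have hint1 := mul_le_mul_of_nonneg_left hq (le_of_lt hg'pos)
        have hint2 : 0 ≤ C₂ ^ 2 * (τ ^ n * γ0 - 1) :=
          mul_nonneg (sq_nonneg C₂) (by linarith)
        linarith only [h2a, hint1, hint2, hg'pos]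
      have h4 : ‖y n - x k‖ ^ 2 < (ρ / 2) ^ 2 :=
        (mul_lt_mul_iff_right₀ (pow_pos hg'pos 2)).mp h3
      have h5 : ‖y n - x k‖ < ρ / 2 :=
        lt_of_pow_lt_pow_left₀ 2 (by linarith) h4
      have hxkball : x k ∈ Metric.ball xs ρ := by
        rw [Metric.mem_ball, dist_eq_norm]; linarith
      have hwball : y n ∈ Metric.ball xs ρ := by
        rw [Metric.mem_ball, dist_eq_norm]
        have h6 := norm_add_le (y n - x k) (x k - xs)
        rw [sub_add_sub_cancel] at h6
        linarith
      have hseg : segment ℝ (x k) (y n) ⊆ Metric.ball xs ρ :=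
        (convex_ball xs ρ).segment_subset hxkball hwball
      have hdl := descent_lite hf hKball hseg
      have hKle : (K : ℝ) ≤ (1 - δ) * (τ ^ n * γ0) / 2 := by
        have h7 : 2 * (K : ℝ) / (1 - δ) < τ ^ n * γ0 := lt_of_le_of_lt hGbK hg'Gb
        rw [div_lt_iff₀ (by linarith : (0:ℝ) < 1 - δ)] at h7
        linarith
      have haccn : f (y n) + (φ (y n)).toReal ≤
          s k - δ * (τ ^ n * γ0) / 2 * ‖y n - x k‖ ^ 2 := by
        have hsk : s k = f (x k) + (φ (x k)).toReal := by rw [hs]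
        have hint3 := mul_le_mul_of_nonneg_right hKle (sq_nonneg ‖y n - x k‖)
        linarith only [hdl, hA', hint3, hsk]
      refine hfail n (Nat.lt_succ_self n) ?_
      rw [psi_real' f φ hwt (hφbot _), hpsix k, ← EReal.coe_sub, EReal.coe_le_coe_iff]
      linarith [haccn]
  -- the limiting inequality L ≤ f xs + (φ xs).toReal
  have hfin : ∀ᶠ j in atTop, L ≤ f (x (σ j + 1))
      - (inner ℝ (gradient f (x (σ j))) (x (σ j + 1) - x (σ j)) : ℝ)
      + (inner ℝ (gradient f (x (σ j))) (xs - x (σ j)) : ℝ)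
      + Γ / 2 * ‖xs - x (σ j)‖ ^ 2 + (φ xs).toReal := by
    filter_upwards [hevN, hevP, hevQ, hevρ] with j hN' hP' hQ' hρ'
    have hΓj : γ (σ j) ≤ Γ := hgb (σ j) hN' hP' hQ' hρ'
    obtain ⟨γ0, i, y, hγ01, hγ02, hmin, hacc, hfail, hγk, hxk1⟩ := halg.step (σ j)
    have hyt : φ (y i) ≠ ⊤ := hxk1 ▸ hTop (σ j + 1)
    have hB := prox_real hφbot hyt hφxs (hmin i le_rfl xs)
    rw [← hxk1, ← hγk] at hB
    have hsk1 : s (σ j + 1) = f (x (σ j + 1)) + (φ (x (σ j + 1))).toReal := by rw [hs]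
    have h0 : 0 ≤ γ (σ j) / 2 * ‖x (σ j + 1) - x (σ j)‖ ^ 2 :=
      mul_nonneg (by linarith [hγpos (σ j)]) (sq_nonneg _)
    have h1 : γ (σ j) / 2 * ‖xs - x (σ j)‖ ^ 2 ≤ Γ / 2 * ‖xs - x (σ j)‖ ^ 2 :=
      mul_le_mul_of_nonneg_right (by linarith) (sq_nonneg _)
    have h2 := hLle (σ j + 1)
    linarith only [hB, hsk1, h0, h1, h2]
  have hRlim : Tendsto (fun j => f (x (σ j + 1))
      - (inner ℝ (gradient f (x (σ j))) (x (σ j + 1) - x (σ j)) : ℝ)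
      + (inner ℝ (gradient f (x (σ j))) (xs - x (σ j)) : ℝ)
      + Γ / 2 * ‖xs - x (σ j)‖ ^ 2 + (φ xs).toReal) atTop
      (𝓝 (f xs - (inner ℝ (gradient f xs) (xs - xs) : ℝ)
        + (inner ℝ (gradient f xs) (xs - xs) : ℝ)
        + Γ / 2 * ‖xs - xs‖ ^ 2 + (φ xs).toReal)) := by
    have T1 : Tendsto (fun j => f (x (σ j + 1))) atTop (𝓝 (f xs)) := (hfc.tendsto xs).comp hconv'
    have T2 : Tendsto (fun j => x (σ j + 1) - x (σ j)) atTop (𝓝 (xs - xs)) := hconv'.sub hconv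
    have T3 : Tendsto (fun j => xs - x (σ j)) atTop (𝓝 (xs - xs)) := tendsto_const_nhds.sub hconv
    have T4 : Tendsto (fun j => (inner ℝ (gradient f (x (σ j))) (x (σ j + 1) - x (σ j)) : ℝ))
        atTop (𝓝 (inner ℝ (gradient f xs) (xs - xs) : ℝ)) := hgradconv.inner T2
    have T5 : Tendsto (fun j => (inner ℝ (gradient f (x (σ j))) (xs - x (σ j)) : ℝ))
        atTop (𝓝 (inner ℝ (gradient f xs) (xs - xs) : ℝ)) := hgradconv.inner T3
    have T6 : Tendsto (fun j => Γ / 2 * ‖xs - x (σ j)‖ ^ 2) atTop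
        (𝓝 (Γ / 2 * ‖xs - xs‖ ^ 2)) := (T3.norm.pow 2).const_mul _
    exact ((((T1.sub T4).add T5).add T6).add tendsto_const_nhds)
  have hLle' : L ≤ f xs + (φ xs).toReal := by
    have h := ge_of_tendsto hRlim hfin
    have hz : xs - xs = (0 : X) := sub_self xs
    rw [hz] at h
    simp only [inner_zero_right, norm_zero] at h
    nlinarith [h]
  have hdown : (L : EReal) ≤ psi f φ xs := by
    rw [psi_real' f φ hφxs (hφbot xs), EReal.coe_le_coe_iff]
    exact hLle'
  have hψeq : psi f φ xs = (L : EReal) := le_antisymm hup hdown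
  rw [hψeq]
  have h := EReal.tendsto_coe.mpr hsL
  exact h.congr (fun k => (hpsix k).symm)
end

section
/- Let {xᵏ} be a sequence generated by the proximal gradient method, suppose ψ is bounded from below on dom φ and φ is bounded from below by an affine function, and let K ⊂ ℕ be an infinite index set such that xᵏ → x* along K. Then limsup_{k→∞, k∈K} φ(xᵏ⁺¹) ≤ φ(x*), and consequently (by lower semicontinuity of φ and xᵏ⁺¹ → x* along K) φ(xᵏ⁺¹) → φ(x*) and ψ(xᵏ⁺¹) → ψ(x*) along K. -/
open Filter Topology Set Pointwise

variable {X : Type*} [NormedAddCommGroup X] [InnerProductSpace ℝ X] [FiniteDimensional ℝ X]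

lemma ereal_helper {r s : ℝ} {ξ ζ : EReal} (hξb : ξ ≠ ⊥) (hζb : ζ ≠ ⊥) (hζt : ζ ≠ ⊤)
    (h : (r : EReal) + ξ ≤ (s : EReal) + ζ) :
    ξ ≠ ⊤ ∧ r + ξ.toReal ≤ s + ζ.toReal := by
  rw [← EReal.coe_toReal hζt hζb, ← EReal.coe_add] at h
  have hξt : ξ ≠ ⊤ := by
    intro he
    rw [he, EReal.coe_add_top, top_le_iff] at h
    exact EReal.coe_ne_top _ h
  refine ⟨hξt, ?_⟩
  rw [← EReal.coe_toReal hξt hξb, ← EReal.coe_add, EReal.coe_le_coe_iff] at h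
  exact h

lemma mvt_helper {f : X → ℝ} (hf : ContDiff ℝ 1 f) {M : ℝ} {c : X} {R : ℝ}
    (hM : ∀ z ∈ Metric.closedBall c R, ‖gradient f z‖ ≤ M)
    {p q : X} (hp : p ∈ Metric.closedBall c R) (hq : q ∈ Metric.closedBall c R) :
    |f q - f p| ≤ M * ‖q - p‖ := by
  have hd : ∀ z ∈ Metric.closedBall c R, DifferentiableAt ℝ f z :=
    fun z _ => (hf.differentiable one_ne_zero) z
  have hb : ∀ z ∈ Metric.closedBall c R, ‖fderiv ℝ f z‖ ≤ M := by
    intro z hz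
    have : ‖gradient f z‖ = ‖fderiv ℝ f z‖ := by
      rw [gradient]
      exact LinearIsometryEquiv.norm_map _ _
    rw [← this]; exact hM z hz
  have := Convex.norm_image_sub_le_of_norm_fderiv_le hd hb (convex_closedBall c R) hp hq
  simpa using this

lemma geom_helper {τ : ℝ} (hτ : 1 < τ) (n : ℕ) :
    ∑ t ∈ Finset.range n, (1/τ) ^ t ≤ (1 - 1/τ)⁻¹ := by
  have h0 : (0:ℝ) ≤ 1/τ := by positivity
  have h1 : 1/τ < 1 := by
    rw [div_lt_one (by linarith)]; exact hτ
  calc ∑ t ∈ Finset.range n, (1/τ) ^ t ≤ ∑' t : ℕ, (1/τ) ^ t :=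
        Summable.sum_le_tsum _ (fun i _ => by positivity) (summable_geometric_of_lt_one h0 h1)
    _ = (1 - 1/τ)⁻¹ := tsum_geometric_of_lt_one h0 h1

set_option maxHeartbeats 2000000 in
lemma one_step {f : X → ℝ} {φ : X → EReal} (hf : ContDiff ℝ 1 f)
    (hφbot : ∀ z : X, φ z ≠ ⊥)
    {τ δ : ℝ} (htau : 1 < τ) (hδ1 : δ < 1)
    {xk : X} {γ0 : ℝ} {i : ℕ} {y : ℕ → X} (hγ0 : 0 < γ0)
    (hmin : ∀ j ≤ i, ∀ z : X,
      proxModel f φ xk (τ ^ j * γ0) (y j) ≤ proxModel f φ xk (τ ^ j * γ0) z)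
    (hfail : ∀ j < i, ¬ psi f φ (y j) ≤
        psi f φ xk - ((δ * (τ ^ j * γ0) / 2 * ‖y j - xk‖ ^ 2 : ℝ) : EReal))
    (hφk : φ xk ≠ ⊤)
    {xs : X} {pR : ℝ} (hpR : φ xs = (pR : EReal))
    {M : ℝ} (hM1 : 1 ≤ M) (hMg : ∀ z ∈ Metric.closedBall xs 2, ‖gradient f z‖ ≤ M)
    {a : X} {b : ℝ} (hab : ∀ z : X, (((inner ℝ a z : ℝ) + b : ℝ) : EReal) ≤ φ z)
    {C₂ C₃ : ℝ} (hC2 : (φ xk).toReal + ‖a‖ * (‖xs‖ + 2) + |b| ≤ C₂) (hC20 : 0 ≤ C₂)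
    (hC3 : ‖a‖ + M ≤ C₃)
    {Γ' : ℝ} (hΓ0 : γ0 ≤ Γ') (hΓD : 2 * (C₂ + C₃) + 1 ≤ Γ')
    (hball : ‖xk - xs‖ ≤ 1) :
    (φ (y i)).toReal ≤ pR + M * ‖xk - xs‖ + (τ * Γ' / 2) * ‖xk - xs‖ ^ 2
      + 3 * M * ‖y i - xk‖ + 2 * M * (4 * M / (1 - δ)) / Γ'
      + (τ / 2) * ((4 * M / (1 - δ)) ^ 2 / Γ') * (1 - 1/τ)⁻¹ := by
  classical
  simp only [proxModel] at hmin
  have h1δ : (0:ℝ) < 1 - δ := by linarith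
  have hτ0 : (0:ℝ) < τ := by linarith
  set G := gradient f xk with hGdef
  set C₀ := 4 * M / (1 - δ) with hC₀def
  set gγ : ℕ → ℝ := fun j => τ ^ j * γ0 with hgγdef
  set s : ℕ → ℝ := fun j => ‖y j - xk‖ with hsdef
  set p : ℕ → ℝ := fun j => (φ (y j)).toReal with hpdef
  have hgγpos : ∀ j, 0 < gγ j := fun j => by
    show 0 < τ ^ j * γ0; positivity
  have hsnn : ∀ j, 0 ≤ s j := fun j => norm_nonneg _
  have hC₀nn : 0 ≤ C₀ := by
    show 0 ≤ 4 * M / (1 - δ); positivity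
  have hC31 : 1 ≤ C₃ := by
    have := norm_nonneg a; linarith
  have hΓ'pos : (0:ℝ) < Γ' := by linarith
  have hxball : xk ∈ Metric.closedBall xs 2 := by
    rw [Metric.mem_closedBall, dist_eq_norm]; linarith
  have hMG : ‖G‖ ≤ M := hMg xk hxball
  have hCS : ∀ v : X, |(inner ℝ G v : ℝ)| ≤ M * ‖v‖ := fun v =>
    le_trans (abs_real_inner_le_norm G v) (mul_le_mul_of_nonneg_right hMG (norm_nonneg v))
  have hytop : ∀ j ≤ i, φ (y j) ≠ ⊤ := fun j hj =>
    (ereal_helper (hφbot _) (hφbot _) hφk (hmin j hj xk)).1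
  have hmin' : ∀ j ≤ i, ∀ z : X, φ z ≠ ⊤ →
      f xk + (inner ℝ G (y j - xk) : ℝ) + gγ j / 2 * s j ^ 2 + p j ≤
      f xk + (inner ℝ G (z - xk) : ℝ) + gγ j / 2 * ‖z - xk‖ ^ 2 + (φ z).toReal :=
    fun j hj z hz => (ereal_helper (hφbot _) (hφbot _) hz (hmin j hj z)).2
  have hup : ∀ j ≤ i, (inner ℝ G (y j - xk) : ℝ) + gγ j / 2 * s j ^ 2 + p j ≤ (φ xk).toReal := by
    intro j hj
    have h := hmin' j hj xk hφk
    simp only [sub_self, inner_zero_right, norm_zero] at h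
    have h0 : (0:ℝ) ^ 2 = 0 := by norm_num
    rw [h0] at h
    linarith
  have hplow : ∀ j ≤ i, -(‖a‖ * (‖xs‖ + 2) + |b|) - ‖a‖ * s j ≤ p j := by
    intro j hj
    have h1 : (inner ℝ a (y j) : ℝ) + b ≤ p j := by
      have := EReal.toReal_le_toReal (hab (y j)) (EReal.coe_ne_bot _) (hytop j hj)
      rw [EReal.toReal_coe] at this; exact this
    have h2 : (inner ℝ a (y j) : ℝ) = (inner ℝ a (y j - xk) : ℝ) + (inner ℝ a xk : ℝ) := by
      rw [inner_sub_right]; ring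
    have h3 : |(inner ℝ a (y j - xk) : ℝ)| ≤ ‖a‖ * s j := abs_real_inner_le_norm _ _
    have h5 : ‖xk‖ ≤ ‖xs‖ + 2 := by
      have := norm_sub_norm_le xk xs; linarith
    have h4 : |(inner ℝ a xk : ℝ)| ≤ ‖a‖ * (‖xs‖ + 2) :=
      le_trans (abs_real_inner_le_norm a xk) (mul_le_mul_of_nonneg_left h5 (norm_nonneg a))
    linarith [h1, (abs_le.mp h3).1, (abs_le.mp h4).1, neg_abs_le b, h2]
  have hquad : ∀ j ≤ i, gγ j / 2 * s j ^ 2 ≤ C₂ + C₃ * s j := by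
    intro j hj
    have h := hup j hj
    have h3 := (abs_le.mp (hCS (y j - xk))).1
    have h4 := hplow j hj
    have h5 : (‖a‖ + M) * s j ≤ C₃ * s j := mul_le_mul_of_nonneg_right hC3 (hsnn j)
    have h6 : (inner ℝ G (y j - xk) : ℝ) ≥ -(M * s j) := h3
    nlinarith [h, h4, h5, hC2]
  have hs1 : ∀ j ≤ i, Γ' ≤ gγ j → s j ≤ 1 := by
    intro j hj hΓ
    by_contra hcon
    push_neg at hcon
    have hq := hquad j hj
    have h3 : Γ' * s j ^ 2 ≤ gγ j * s j ^ 2 :=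
      mul_le_mul_of_nonneg_right hΓ (sq_nonneg _)
    have e1 : s j ≤ s j ^ 2 := by nlinarith [sq_nonneg (s j - 1), hcon]
    have e2 : 1 ≤ s j ^ 2 := by nlinarith [sq_nonneg (s j - 1), hcon]
    have e3 : C₂ ≤ C₂ * s j ^ 2 := by nlinarith [mul_nonneg hC20 (by linarith : (0:ℝ) ≤ s j ^ 2 - 1)]
    have e4 : C₃ * s j ≤ C₃ * s j ^ 2 := mul_le_mul_of_nonneg_left e1 (by linarith)
    have e5 : (2 * (C₂ + C₃) + 1) * s j ^ 2 ≤ Γ' * s j ^ 2 :=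
      mul_le_mul_of_nonneg_right hΓD (sq_nonneg _)
    linarith [h3, hq, e3, e4, e2, e5]
  have hpsixk : psi f φ xk = ((f xk + (φ xk).toReal : ℝ) : EReal) := by
    simp only [psi]
    rw [EReal.coe_add, EReal.coe_toReal hφk (hφbot xk)]
  have hpsiy : ∀ j ≤ i, psi f φ (y j) = ((f (y j) + p j : ℝ) : EReal) := by
    intro j hj
    simp only [psi]
    rw [EReal.coe_add]
    show _ = _ + ((φ (y j)).toReal : EReal)
    rw [EReal.coe_toReal (hytop j hj) (hφbot _)]
  have hfb : ∀ j < i, Γ' ≤ gγ j → gγ j * s j ≤ C₀ := by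
    intro j hj hΓ
    have hji : j ≤ i := le_of_lt hj
    have hsle := hs1 j hji hΓ
    have hyball : y j ∈ Metric.closedBall xs 2 := by
      rw [Metric.mem_closedBall, dist_eq_norm]
      calc ‖y j - xs‖ = ‖(y j - xk) + (xk - xs)‖ := by rw [sub_add_sub_cancel]
        _ ≤ ‖y j - xk‖ + ‖xk - xs‖ := norm_add_le _ _
        _ ≤ 2 := by
            have : ‖y j - xk‖ = s j := rfl
            linarith [this ▸ hsle]
    have hmv := mvt_helper hf hMg hxball hyball
    have hmv' : f (y j) - f xk ≤ M * s j := (abs_le.mp hmv).2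
    have hfl := hfail j hj
    rw [hpsiy j hji, hpsixk, ← EReal.coe_sub, EReal.coe_le_coe_iff] at hfl
    push_neg at hfl
    have hu := hup j hji
    have h3 := (abs_le.mp (hCS (y j - xk))).1
    have hkey : (1 - δ) * (gγ j / 2) * s j ^ 2 < 2 * M * s j := by
      have : δ * (τ ^ j * γ0) / 2 * ‖y j - xk‖ ^ 2 = δ * (gγ j / 2) * s j ^ 2 := by
        show δ * (τ ^ j * γ0) / 2 * ‖y j - xk‖ ^ 2 = δ * ((τ ^ j * γ0) / 2) * ‖y j - xk‖ ^ 2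
        ring
      rw [this] at hfl
      nlinarith [hfl, hu, h3, hmv']
    have hspos : 0 < s j := by
      rcases lt_or_eq_of_le (hsnn j) with h | h
      · exact h
      · exfalso
        rw [← h] at hkey
        norm_num at hkey
    have h7 : ((1 - δ) * (gγ j * s j)) * s j < (4 * M) * s j := by linarith [hkey]
    have h8 : (1 - δ) * (gγ j * s j) < 4 * M := by
      have := lt_of_mul_lt_mul_right h7 (hsnn j)
      linarith
    have h9 : gγ j * s j < 4 * M / (1 - δ) := by
      rw [lt_div_iff₀ h1δ]; linarith
    exact le_of_lt h9
  -- index J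
  set J := Nat.findGreatest (fun j => gγ j ≤ τ * Γ') i with hJdef
  have hP0 : gγ 0 ≤ τ * Γ' := by
    show τ ^ 0 * γ0 ≤ τ * Γ'
    rw [pow_zero, one_mul]
    nlinarith [hΓ'pos]
  have hJspec : gγ J ≤ τ * Γ' := Nat.findGreatest_spec (P := fun j => gγ j ≤ τ * Γ') (Nat.zero_le i) hP0
  have hJle : J ≤ i := Nat.findGreatest_le i
  have hJgt : ∀ j, J < j → j ≤ i → τ * Γ' < gγ j := by
    intro j h1 h2
    exact lt_of_not_ge (Nat.findGreatest_is_greatest (P := fun j => gγ j ≤ τ * Γ') h1 h2)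
  have hJΓ : J < i → Γ' ≤ gγ J := by
    intro h
    have h1 := hJgt (J + 1) (Nat.lt_succ_self J) h
    have h2 : gγ (J + 1) = τ * gγ J := by
      show τ ^ (J + 1) * γ0 = τ * (τ ^ J * γ0)
      rw [pow_succ]; ring
    rw [h2] at h1
    have := lt_of_mul_lt_mul_left h1 (le_of_lt hτ0)
    linarith
  have hgJ : ∀ j, J ≤ j → j < i → Γ' ≤ gγ j := by
    intro j h1 h2
    rcases eq_or_lt_of_le h1 with he | hl
    · exact he ▸ hJΓ (lt_of_le_of_lt h1 h2)
    · have := hJgt j hl (le_of_lt h2)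
      nlinarith [hΓ'pos]
  have hgeom : ∀ j, J ≤ j → j < i → s j ≤ C₀ * (1/τ) ^ (j - J) / Γ' := by
    intro j h1 h2
    have hJi : J < i := lt_of_le_of_lt h1 h2
    have hgγJ : Γ' ≤ gγ J := hJΓ hJi
    have hsplit : gγ j = τ ^ (j - J) * gγ J := by
      show τ ^ j * γ0 = τ ^ (j - J) * (τ ^ J * γ0)
      rw [← mul_assoc, ← pow_add, Nat.sub_add_cancel h1]
    have hτd : (1:ℝ) ≤ τ ^ (j - J) := one_le_pow₀ (le_of_lt htau)
    have hlow : τ ^ (j - J) * Γ' ≤ gγ j := by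
      rw [hsplit]
      exact mul_le_mul_of_nonneg_left hgγJ (by positivity)
    have hfbj := hfb j h2 (le_trans (by nlinarith [hΓ'pos]) hlow)
    have hs' : s j ≤ C₀ / gγ j := by
      rw [le_div_iff₀ (hgγpos j)]
      calc s j * gγ j = gγ j * s j := by ring
        _ ≤ C₀ := hfbj
    calc s j ≤ C₀ / gγ j := hs'
      _ ≤ C₀ / (τ ^ (j - J) * Γ') :=
          div_le_div_of_nonneg_left hC₀nn (by positivity) hlow
      _ = C₀ * (1/τ) ^ (j - J) / Γ' := by
          rw [one_div, inv_pow]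
          field_simp
  have hstep : ∀ j, J ≤ j → j + 1 ≤ i →
      p (j+1) + (inner ℝ G (y (j+1) - xk) : ℝ) ≤
      p j + (inner ℝ G (y j - xk) : ℝ) + (τ/2) * (C₀^2/Γ') * (1/τ) ^ (j - J) := by
    intro j h1 h2
    have h := hmin' (j+1) h2 (y j) (hytop j (by omega))
    have hrw1 : ‖y j - xk‖ = s j := rfl
    have hrw2 : (φ (y j)).toReal = p j := rfl
    rw [hrw1, hrw2] at h
    have hgs : gγ j * s j ≤ C₀ := hfb j (by omega) (hgJ j h1 (by omega))
    have hsj : s j ≤ C₀ * (1/τ) ^ (j - J) / Γ' := hgeom j h1 (by omega)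
    have hgsucc : gγ (j+1) = τ * gγ j := by
      show τ ^ (j + 1) * γ0 = τ * (τ ^ j * γ0)
      rw [pow_succ]; ring
    have hsq : 0 ≤ gγ (j+1) / 2 * s (j+1) ^ 2 := by
      have := hgγpos (j+1)
      have := hsnn (j+1)
      positivity
    have e1 : gγ (j+1) / 2 * s j ^ 2 = (τ/2) * (gγ j * s j) * s j := by
      rw [hgsucc]; ring
    have e2 : (τ/2) * (gγ j * s j) * s j ≤ (τ/2) * C₀ * s j := by
      apply mul_le_mul_of_nonneg_right _ (hsnn j)
      apply mul_le_mul_of_nonneg_left hgs (by linarith)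
    have e3 : (τ/2) * C₀ * s j ≤ (τ/2) * C₀ * (C₀ * (1/τ) ^ (j - J) / Γ') := by
      apply mul_le_mul_of_nonneg_left hsj
      positivity
    have e4 : (τ/2) * C₀ * (C₀ * (1/τ) ^ (j - J) / Γ') = (τ/2) * (C₀^2/Γ') * (1/τ) ^ (j - J) := by
      ring
    linarith [h]
  have htel : ∀ n, J + n ≤ i →
      p (J + n) + (inner ℝ G (y (J + n) - xk) : ℝ) ≤
      p J + (inner ℝ G (y J - xk) : ℝ) + (τ/2) * (C₀^2/Γ') * ∑ t ∈ Finset.range n, (1/τ) ^ t := by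
    intro n
    induction n with
    | zero => intro _; simp
    | succ n ih =>
      intro h
      have h1 := ih (by omega)
      have h2 := hstep (J + n) (by omega) (by omega)
      rw [Nat.add_sub_cancel_left] at h2
      rw [Finset.sum_range_succ]
      have e : J + (n + 1) = J + n + 1 := by omega
      rw [e]
      linarith [h1, h2]
  have htel' := htel (i - J) (by omega)
  rw [Nat.add_sub_cancel' hJle] at htel'
  have hsum := geom_helper htau (i - J)
  have hBsum : (τ/2) * (C₀^2/Γ') * ∑ t ∈ Finset.range (i - J), (1/τ) ^ t ≤
      (τ/2) * (C₀^2/Γ') * (1 - 1/τ)⁻¹ := by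
    apply mul_le_mul_of_nonneg_left hsum
    positivity
  have hbase : p J ≤ pR + M * (‖xk - xs‖ + s J) + (τ * Γ' / 2) * ‖xk - xs‖ ^ 2 := by
    have h := hmin' J hJle xs (by rw [hpR]; exact EReal.coe_ne_top _)
    have hto : (φ xs).toReal = pR := by rw [hpR]; exact EReal.toReal_coe _
    rw [hto] at h
    have hnrev : ‖xs - xk‖ = ‖xk - xs‖ := norm_sub_rev _ _
    rw [hnrev] at h
    have h1 := (abs_le.mp (hCS (y J - xk))).1
    have h2 := (abs_le.mp (hCS (xs - xk))).2
    rw [hnrev] at h2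
    have h3 : gγ J / 2 * ‖xk - xs‖ ^ 2 ≤ (τ * Γ' / 2) * ‖xk - xs‖ ^ 2 :=
      mul_le_mul_of_nonneg_right (by linarith [hJspec]) (sq_nonneg _)
    have h4 : 0 ≤ gγ J / 2 * s J ^ 2 := by
      have := hgγpos J
      have := hsnn J
      positivity
    linarith
  have hsJ : s J ≤ C₀ / Γ' + ‖y i - xk‖ := by
    rcases eq_or_lt_of_le hJle with he | hl
    · have hse : s J = ‖y i - xk‖ := by rw [he]
      have : 0 ≤ C₀ / Γ' := by positivity
      linarith [hse]
    · have h1 := hfb J hl (hJΓ hl)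
      have h2 : s J ≤ C₀ / Γ' := by
        have h3 : s J ≤ C₀ / gγ J := by
          rw [le_div_iff₀ (hgγpos J)]
          calc s J * gγ J = gγ J * s J := by ring
            _ ≤ C₀ := h1
        have h4 : C₀ / gγ J ≤ C₀ / Γ' :=
          div_le_div_of_nonneg_left hC₀nn hΓ'pos (hJΓ hl)
        linarith
      linarith [norm_nonneg (y i - xk)]
  -- final assembly
  have hf1 := (abs_le.mp (hCS (y i - xk))).1
  have hf2 := (abs_le.mp (hCS (y J - xk))).2
  have hMsJ : M * s J ≤ M * (C₀ / Γ' + ‖y i - xk‖) :=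
    mul_le_mul_of_nonneg_left hsJ (by linarith)
  have hgoal : (φ (y i)).toReal = p i := rfl
  rw [hgoal]
  have hyi : ‖y i - xk‖ = s i := rfl
  have hyJ : ‖y J - xk‖ = s J := rfl
  rw [hyJ] at hf2
  rw [hyi] at hf1 hsJ hMsJ ⊢
  have t1 : p i ≤ p J + M * s J + (τ / 2 * (C₀ ^ 2 / Γ') * (1 - 1/τ)⁻¹) + M * s i := by
    linarith [htel', hBsum, hf1, hf2]
  have t2 : M * (‖xk - xs‖ + s J) = M * ‖xk - xs‖ + M * s J := by ring
  have t3 : M * (C₀ / Γ' + s i) = M * C₀ / Γ' + M * s i := by ring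
  rw [t2] at hbase
  rw [t3] at hMsJ
  have t4 : 2 * M * C₀ / Γ' = M * C₀ / Γ' + M * C₀ / Γ' := by ring
  linarith [t1, hbase, hMsJ, t4]

lemma psi_coe {f : X → ℝ} {φ : X → EReal} {z : X} (ht : φ z ≠ ⊤) (hb : φ z ≠ ⊥) :
    psi f φ z = ((f z + (φ z).toReal : ℝ) : EReal) := by
  simp only [psi]
  rw [EReal.coe_add, EReal.coe_toReal ht hb]

set_option maxHeartbeats 2000000 in
/-- along a subsequence converging to `x*`,
`limsup φ(xᵏ⁺¹) ≤ φ(x*)`, and consequently `φ(xᵏ⁺¹) → φ(x*)` and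
`ψ(xᵏ⁺¹) → ψ(x*)` along this subsequence. -/
theorem statement9
    (f : X → ℝ) (φ : X → EReal)
    (hf : ContDiff ℝ 1 f) (hφlsc : LowerSemicontinuous φ)
    (hφbot : ∀ z : X, φ z ≠ ⊥) (hproper : ∃ z : X, φ z ≠ ⊤)
    (τ γmin γmax δ : ℝ) (x : ℕ → X) (γ : ℕ → ℝ)
    (halg : ProxGrad f φ τ γmin γmax δ x γ)
    (hbdd : ∃ m : ℝ, ∀ z : X, φ z ≠ ⊤ → (m : EReal) ≤ psi f φ z)
    (haff : ∃ a : X, ∃ b : ℝ, ∀ z : X, (((inner ℝ a z : ℝ) + b : ℝ) : EReal) ≤ φ z)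
    (xs : X) (σ : ℕ → ℕ) (hσ : StrictMono σ)
    (hconv : Tendsto (fun k => x (σ k)) atTop (nhds xs)) :
    Filter.limsup (fun k => φ (x (σ k + 1))) atTop ≤ φ xs ∧
    Tendsto (fun k => φ (x (σ k + 1))) atTop (nhds (φ xs)) ∧
    Tendsto (fun k => psi f φ (x (σ k + 1))) atTop (nhds (psi f φ xs)) := by
  classical
  obtain ⟨mlow, hm⟩ := hbdd
  obtain ⟨a, b, hab⟩ := haff
  have htau := halg.htau
  have hgmin := halg.hgmin
  have hδ0 := halg.hdelta0
  have hδ1 := halg.hdelta1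
  choose γ0 i y hγmin hγmax hmin hacc hfail hγeq hxeq using halg.step
  clear hγeq
  have hγ0pos : ∀ k, 0 < γ0 k := fun k => lt_of_lt_of_le hgmin (hγmin k)
  -- all iterates stay in the domain of φ
  have hfin : ∀ k, φ (x k) ≠ ⊤ := by
    intro k
    induction k with
    | zero => exact halg.hx0
    | succ n ih =>
      intro htop
      have hacc' := hacc n
      rw [← hxeq n] at hacc'
      have hψtop : psi f φ (x (n + 1)) = ⊤ := by
        simp only [psi, htop, EReal.coe_add_top]
      rw [hψtop, psi_coe ih (hφbot _), ← EReal.coe_sub, top_le_iff] at hacc'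
      exact EReal.coe_ne_top _ hacc'
  obtain ⟨Ψ, hΨeq⟩ : ∃ g : ℕ → ℝ, ∀ k, g k = f (x k) + (φ (x k)).toReal :=
    ⟨_, fun _ => rfl⟩
  have hψcoe : ∀ k, psi f φ (x k) = ((Ψ k : ℝ) : EReal) := fun k => by
    rw [hΨeq k]; exact psi_coe (hfin k) (hφbot _)
  have hdec : ∀ k, Ψ (k + 1) ≤ Ψ k - δ * γmin / 2 * ‖x (k + 1) - x k‖ ^ 2 := by
    intro k
    have h := hacc k
    rw [← hxeq k, hψcoe k, hψcoe (k + 1), ← EReal.coe_sub, EReal.coe_le_coe_iff] at h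
    have h3 : (1 : ℝ) ≤ τ ^ (i k) := one_le_pow₀ (le_of_lt htau)
    have h4 : γmin ≤ τ ^ (i k) * γ0 k := by nlinarith [hγmin k, hgmin]
    have h2 : δ * γmin / 2 * ‖x (k + 1) - x k‖ ^ 2 ≤
        δ * (τ ^ (i k) * γ0 k) / 2 * ‖x (k + 1) - x k‖ ^ 2 := by
      apply mul_le_mul_of_nonneg_right _ (sq_nonneg _)
      nlinarith [hδ0]
    linarith
  have hΨanti : Antitone Ψ := by
    apply antitone_nat_of_succ_le
    intro k
    have h1 : 0 ≤ δ * γmin / 2 * ‖x (k + 1) - x k‖ ^ 2 := by positivity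
    linarith [hdec k]
  have hΨlb : ∀ k, mlow ≤ Ψ k := by
    intro k
    have h := hm (x k) (hfin k)
    rw [hψcoe k, EReal.coe_le_coe_iff] at h
    exact h
  have hΨtend : Tendsto Ψ atTop (𝓝 (⨅ k, Ψ k)) := by
    apply tendsto_atTop_ciInf hΨanti
    refine ⟨mlow, ?_⟩
    rintro r ⟨k, rfl⟩
    exact hΨlb k
  have hdiff0 : Tendsto (fun k => Ψ k - Ψ (k + 1)) atTop (𝓝 0) := by
    have h2 : Tendsto (fun k => Ψ (k + 1)) atTop (𝓝 (⨅ k, Ψ k)) :=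
      hΨtend.comp (tendsto_add_atTop_nat 1)
    simpa using hΨtend.sub h2
  have hdn : Tendsto (fun k => ‖x (k + 1) - x k‖) atTop (𝓝 0) := by
    have hpos : 0 < δ * γmin := mul_pos hδ0 hgmin
    have hsq : Tendsto (fun k => ‖x (k + 1) - x k‖ ^ 2) atTop (𝓝 0) := by
      apply squeeze_zero (fun k => sq_nonneg _)
        (g := fun k => 2 / (δ * γmin) * (Ψ k - Ψ (k + 1)))
      · intro k
        have e : 2 / (δ * γmin) * (Ψ k - Ψ (k + 1)) = 2 * (Ψ k - Ψ (k + 1)) / (δ * γmin) := by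
          ring
        rw [e, le_div_iff₀ hpos]
        nlinarith [hdec k]
      · simpa using hdiff0.const_mul (2 / (δ * γmin))
    have h := hsq.sqrt
    simp only [Real.sqrt_zero] at h
    have he : (fun k => ‖x (k + 1) - x k‖) = fun k => Real.sqrt (‖x (k + 1) - x k‖ ^ 2) :=
      funext fun k => (Real.sqrt_sq (norm_nonneg _)).symm
    rw [he]
    exact h
  have hσtop : Tendsto σ atTop atTop := hσ.tendsto_atTop
  have hdσ : Tendsto (fun m => ‖x (σ m + 1) - x (σ m)‖) atTop (𝓝 0) := hdn.comp hσtop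
  have hconv' : Tendsto (fun m => x (σ m + 1)) atTop (𝓝 xs) := by
    have h1 : Tendsto (fun m => x (σ m + 1) - x (σ m)) atTop (𝓝 0) := by
      rw [tendsto_zero_iff_norm_tendsto_zero]
      exact hdσ
    have h2 := h1.add hconv
    simpa using h2
  have hliminf : φ xs ≤ liminf (fun m => φ (x (σ m + 1))) atTop := by
    rw [le_liminf_iff]
    intro c hc
    exact hconv'.eventually (hφlsc xs c hc)
  -- constants
  have hgradc : Continuous (gradient f) := by
    have h1 : Continuous (fderiv ℝ f) := hf.continuous_fderiv one_ne_zero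
    unfold gradient
    exact (LinearIsometryEquiv.continuous _).comp h1
  obtain ⟨M₁, hM₁⟩ := (isCompact_closedBall xs 2).exists_bound_of_continuousOn
    hgradc.continuousOn
  obtain ⟨M₂, hM₂⟩ := (isCompact_closedBall xs 2).exists_bound_of_continuousOn
    hf.continuous.continuousOn
  obtain ⟨M, hM1, hMg, hMf⟩ : ∃ M : ℝ, 1 ≤ M ∧
      (∀ z ∈ Metric.closedBall xs 2, ‖gradient f z‖ ≤ M) ∧
      (∀ z ∈ Metric.closedBall xs 2, |f z| ≤ M) := by
    refine ⟨max (max M₁ M₂) 1, le_max_right _ _, ?_, ?_⟩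
    · intro z hz
      exact le_trans (hM₁ z hz) (le_trans (le_max_left _ _) (le_max_left _ _))
    · intro z hz
      have h := hM₂ z hz
      rw [Real.norm_eq_abs] at h
      exact le_trans h (le_trans (le_max_right _ _) (le_max_left _ _))
  have hΦb : ∀ k, x k ∈ Metric.closedBall xs 2 → (φ (x k)).toReal ≤ Ψ 0 + M := by
    intro k hk
    have h1 : Ψ k ≤ Ψ 0 := hΨanti (Nat.zero_le k)
    have h2 : -M ≤ f (x k) := by
      have := (abs_le.mp (hMf (x k) hk)).1
      linarith
    have h3 := hΨeq k
    have h4 := hΨeq 0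
    linarith
  obtain ⟨C₂, hC20, hC2k'⟩ : ∃ c : ℝ, 0 ≤ c ∧ ∀ k, x k ∈ Metric.closedBall xs 2 →
      (φ (x k)).toReal + ‖a‖ * (‖xs‖ + 2) + |b| ≤ c := by
    refine ⟨max (Ψ 0 + M) 0 + ‖a‖ * (‖xs‖ + 2) + |b|, ?_, ?_⟩
    · have h1 : (0:ℝ) ≤ max (Ψ 0 + M) 0 := le_max_right _ _
      have h2 : (0:ℝ) ≤ ‖a‖ * (‖xs‖ + 2) := by positivity
      have h3 : (0:ℝ) ≤ |b| := abs_nonneg b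
      linarith
    · intro k hk
      have h8 : (φ (x k)).toReal ≤ max (Ψ 0 + M) 0 := le_trans (hΦb k hk) (le_max_left _ _)
      linarith
  obtain ⟨C₃, hC3, hC31⟩ : ∃ c : ℝ, ‖a‖ + M ≤ c ∧ 1 ≤ c :=
    ⟨‖a‖ + M, le_rfl, by linarith [norm_nonneg a]⟩
  -- the key quantitative bound
  have hmain : ∀ ε : ℝ, 0 < ε → ∀ pR : ℝ, φ xs = (pR : EReal) →
      ∀ᶠ m in atTop, (φ (x (σ m + 1))).toReal ≤ pR + ε := by
    intro ε hε pR hpR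
    have h1δ : (0:ℝ) < 1 - δ := by linarith
    have hMpos : (0:ℝ) < M := by linarith
    have hτ0 : (0:ℝ) < τ := by linarith
    have hq0 : (0:ℝ) < 1 - 1/τ := by
      have h2 : 1/τ < 1 := by rw [div_lt_one hτ0]; exact htau
      linarith
    have hq1 : 0 < (1 - 1/τ)⁻¹ := inv_pos.mpr hq0
    obtain ⟨C₀, hC₀eq, hC₀pos⟩ : ∃ c : ℝ, c = 4 * M / (1 - δ) ∧ 0 < c :=
      ⟨_, rfl, div_pos (by linarith) h1δ⟩
    obtain ⟨E, hEeq, hEpos⟩ :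
        ∃ e : ℝ, e = 2 * M * C₀ + τ / 2 * (C₀ ^ 2) * (1 - 1/τ)⁻¹ ∧ 0 < e := by
      refine ⟨_, rfl, ?_⟩
      have h4 : 0 < 2 * M * C₀ := by positivity
      have h5 : 0 < τ / 2 * (C₀ ^ 2) * (1 - 1/τ)⁻¹ := by positivity
      linarith
    obtain ⟨Γ', hΓ'γmax, hΓ'D, hΓ'E⟩ :
        ∃ g : ℝ, γmax ≤ g ∧ 2 * (C₂ + C₃) + 1 ≤ g ∧ 2 * E / ε ≤ g :=
      ⟨max (max γmax (2 * (C₂ + C₃) + 1)) (2 * E / ε),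
        le_trans (le_max_left _ _) (le_max_left _ _),
        le_trans (le_max_right _ _) (le_max_left _ _), le_max_right _ _⟩
    have hΓ'pos : 0 < Γ' := by linarith
    have hΓ'ne : Γ' ≠ 0 := ne_of_gt hΓ'pos
    have hτne : τ ≠ 0 := ne_of_gt hτ0
    have hεne : ε ≠ 0 := ne_of_gt hε
    have hM1pos : (0:ℝ) < M + 1 := by linarith
    have hM1ne : M + 1 ≠ 0 := ne_of_gt hM1pos
    have hEΓ : E / Γ' ≤ ε / 2 := by
      rw [div_le_iff₀ hΓ'pos]
      have h6 := mul_le_mul_of_nonneg_left hΓ'E (le_of_lt (half_pos hε))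
      have e : ε / 2 * (2 * E / ε) = E := by field_simp
      rw [e] at h6
      linarith
    have hden : 0 < ε / (4 * τ * Γ') := div_pos hε (by positivity)
    obtain ⟨η, hηpos, hη1, hη2, hη3⟩ : ∃ h : ℝ, 0 < h ∧ h ≤ 1 ∧ h ≤ ε / (8 * (M + 1)) ∧
        h ≤ Real.sqrt (ε / (4 * τ * Γ')) := by
      refine ⟨min 1 (min (ε / (8 * (M + 1))) (Real.sqrt (ε / (4 * τ * Γ')))), ?_,
        min_le_left _ _,
        le_trans (min_le_right _ _) (min_le_left _ _),
        le_trans (min_le_right _ _) (min_le_right _ _)⟩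
      exact lt_min one_pos (lt_min (div_pos hε (by linarith)) (Real.sqrt_pos.mpr hden))
    have hη₂pos : 0 < ε / (24 * (M + 1)) := div_pos hε (by linarith)
    have hev1 : ∀ᶠ m in atTop, ‖x (σ m) - xs‖ < η := by
      have h7 := Metric.tendsto_nhds.mp hconv η hηpos
      filter_upwards [h7] with m hm'
      rwa [dist_eq_norm] at hm'
    have hev2 : ∀ᶠ m in atTop, ‖x (σ m + 1) - x (σ m)‖ < ε / (24 * (M + 1)) :=
      hdσ.eventually (gt_mem_nhds hη₂pos)
    filter_upwards [hev1, hev2] with m hb' hd'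
    have hball : ‖x (σ m) - xs‖ ≤ 1 := le_trans (le_of_lt hb') hη1
    have hxball : x (σ m) ∈ Metric.closedBall xs 2 := by
      rw [Metric.mem_closedBall, dist_eq_norm]
      linarith
    have hC2k := hC2k' (σ m) hxball
    have hstep := one_step hf hφbot htau hδ1 (hγ0pos (σ m)) (hmin (σ m)) (hfail (σ m))
      (hfin (σ m)) hpR hM1 hMg hab hC2k hC20 hC3
      (le_trans (hγmax (σ m)) hΓ'γmax) hΓ'D hball
    rw [← hxeq (σ m), ← hC₀eq] at hstep
    have hb2 : ‖x (σ m) - xs‖ ≤ ε / (8 * (M + 1)) := le_trans (le_of_lt hb') hη2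
    have hb3 : ‖x (σ m) - xs‖ ≤ Real.sqrt (ε / (4 * τ * Γ')) := le_trans (le_of_lt hb') hη3
    have hsq : ‖x (σ m) - xs‖ ^ 2 ≤ ε / (4 * τ * Γ') := by
      have h9 : ‖x (σ m) - xs‖ ^ 2 ≤ Real.sqrt (ε / (4 * τ * Γ')) ^ 2 :=
        pow_le_pow_left₀ (norm_nonneg _) hb3 2
      rwa [Real.sq_sqrt (le_of_lt hden)] at h9
    have hT1 : M * ‖x (σ m) - xs‖ ≤ ε / 8 := by
      calc M * ‖x (σ m) - xs‖ ≤ M * (ε / (8 * (M + 1))) :=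
            mul_le_mul_of_nonneg_left hb2 (by linarith)
        _ ≤ (M + 1) * (ε / (8 * (M + 1))) :=
            mul_le_mul_of_nonneg_right (by linarith) (le_of_lt (div_pos hε (by linarith)))
        _ = ε / 8 := by field_simp
    have hT2 : τ * Γ' / 2 * ‖x (σ m) - xs‖ ^ 2 ≤ ε / 8 := by
      have h11 : (0:ℝ) ≤ τ * Γ' / 2 := by
        have := mul_pos hτ0 hΓ'pos
        linarith
      calc τ * Γ' / 2 * ‖x (σ m) - xs‖ ^ 2 ≤ τ * Γ' / 2 * (ε / (4 * τ * Γ')) :=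
            mul_le_mul_of_nonneg_left hsq h11
        _ = ε / 8 := by field_simp; ring
    have hT3 : 3 * M * ‖x (σ m + 1) - x (σ m)‖ ≤ ε / 8 := by
      calc 3 * M * ‖x (σ m + 1) - x (σ m)‖ ≤ 3 * M * (ε / (24 * (M + 1))) :=
            mul_le_mul_of_nonneg_left (le_of_lt hd') (by linarith)
        _ ≤ 3 * (M + 1) * (ε / (24 * (M + 1))) :=
            mul_le_mul_of_nonneg_right (by linarith) (le_of_lt hη₂pos)
        _ = ε / 8 := by field_simp; ring
    have hT4 : 2 * M * C₀ / Γ' + τ / 2 * (C₀ ^ 2 / Γ') * (1 - 1/τ)⁻¹ ≤ ε / 2 := by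
      have e : 2 * M * C₀ / Γ' + τ / 2 * (C₀ ^ 2 / Γ') * (1 - 1/τ)⁻¹ = E / Γ' := by
        rw [hEeq]; ring
      rw [e]
      exact hEΓ
    linarith [hstep, hT1, hT2, hT3, hT4, hε]
  -- Part 1 : the limsup estimate
  have hlimsup : limsup (fun m => φ (x (σ m + 1))) atTop ≤ φ xs := by
    rcases eq_or_ne (φ xs) ⊤ with ht | ht
    · rw [ht]; exact le_top
    · have hpeq : φ xs = ((φ xs).toReal : EReal) := (EReal.coe_toReal ht (hφbot xs)).symm
      set pR := (φ xs).toReal with hpRdef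
      have hb1 : ∀ ε : ℝ, 0 < ε →
          limsup (fun m => φ (x (σ m + 1))) atTop ≤ ((pR + ε : ℝ) : EReal) := by
        intro ε hε
        have hev : ∀ᶠ m in atTop, φ (x (σ m + 1)) ≤ ((pR + ε : ℝ) : EReal) := by
          filter_upwards [hmain ε hε pR hpeq] with m hm'
          rw [← EReal.coe_toReal (hfin (σ m + 1)) (hφbot _)]
          exact EReal.coe_le_coe_iff.mpr hm'
        exact limsup_le_of_le (by isBoundedDefault) hev
      by_contra hcon
      push_neg at hcon
      rw [hpeq] at hcon
      obtain ⟨q, hq1, hq2⟩ := EReal.lt_iff_exists_real_btwn.mp hcon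
      have hε : 0 < q - pR := by
        have : pR < q := EReal.coe_lt_coe_iff.mp hq1
        linarith
      have h10 := hb1 (q - pR) hε
      rw [show pR + (q - pR) = q by ring] at h10
      exact absurd (lt_of_le_of_lt h10 hq2) (lt_irrefl _)
  have htend : Tendsto (fun m => φ (x (σ m + 1))) atTop (𝓝 (φ xs)) :=
    tendsto_of_le_liminf_of_limsup_le hliminf hlimsup
  refine ⟨hlimsup, htend, ?_⟩
  have hftend : Tendsto (fun m => ((f (x (σ m + 1)) : ℝ) : EReal)) atTop
      (𝓝 ((f xs : ℝ) : EReal)) :=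
    EReal.tendsto_coe.mpr ((hf.continuous.tendsto xs).comp hconv')
  have hadd := EReal.continuousAt_add (p := (((f xs : ℝ) : EReal), φ xs))
    (Or.inl (EReal.coe_ne_top _)) (Or.inl (EReal.coe_ne_bot _))
  have hcomp := hadd.tendsto.comp (hftend.prodMk_nhds htend)
  simp only [psi]
  exact hcomp
end
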